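/- arXiv:1605.06886 — 4 statements merged into one kernel-verified Lean document; each statement's English description precedes it below -/
import Mathlib

section
/- For every real parameter θ with 0 ≤ θ ≤ 1 and every positive integer N, the expected side-length under the alternative-construction nonempty-patch distribution on dimension size N equals N/(θ+(1−θ)·N); that is, Σ_{s=1}^{N} Σ_{l=1}^{N−s+1} l · w(s)·q(l|s)/(θ+(1−θ)·N) = N/(θ+(1−θ)·N). (This is the expected side-length formula E(l^{(d)}) = N_X^{(d)}/(θ+(1−θ)N_X^{(d)}) in the proof of Proposition 1.) -/
/-- Initial-position weight: `w θ 1 = 1`, `w θ s = 1 - θ` for `s ≥ 2`. -/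
noncomputable def w (θ : ℝ) (s : ℕ) : ℝ := if s = 1 then 1 else 1 - θ

/-- Truncated geometric side-length distribution on dimension size `N` given start `s`:
`q θ N s l = θ^(l-1)·(1-θ)` for `1 ≤ l < N - s + 1` and `q θ N s l = θ^(N-s)` for
`l = N - s + 1`. -/
noncomputable def q (θ : ℝ) (N s l : ℕ) : ℝ :=
  if l = N - s + 1 then θ ^ (N - s) else θ ^ (l - 1) * (1 - θ)

/-
The mean of the truncated geometric law `q θ N s` is `∑_{k ≤ N - s} θ^k`. Since
`(1 - θ) ∑_{k ≤ m} θ^k = 1 - θ^(m+1)`, the `w`-weighted means add up to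
`∑_{k < N} θ^k + ∑_{m < N - 1} (1 - θ^(m+1)) = N`; the normalising constant just divides through.
-/

theorem sum_Icc_natCast_mul_pow_mul_one_sub (θ : ℝ) (n : ℕ) :
    ∑ l ∈ Finset.Icc 1 n, (l : ℝ) * (θ ^ (l - 1) * (1 - θ))
      = ∑ k ∈ Finset.range n, θ ^ k - n * θ ^ n := by
  induction n with
  | zero => simp
  | succ n ih =>
    rw [Finset.sum_Icc_succ_top (by omega), ih, Finset.sum_range_succ]
    push_cast
    ring

theorem sum_Icc_mul_q (θ : ℝ) (N s : ℕ) :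
    ∑ l ∈ Finset.Icc 1 (N - s + 1), (l : ℝ) * q θ N s l
      = ∑ k ∈ Finset.range (N - s + 1), θ ^ k := by
  have hbelow : ∑ l ∈ Finset.Icc 1 (N - s), (l : ℝ) * q θ N s l
      = ∑ l ∈ Finset.Icc 1 (N - s), (l : ℝ) * (θ ^ (l - 1) * (1 - θ)) := by
    refine Finset.sum_congr rfl fun l hl => ?_
    rw [Finset.mem_Icc] at hl
    rw [q, if_neg (by omega)]
  rw [Finset.sum_Icc_succ_top (by omega), hbelow, sum_Icc_natCast_mul_pow_mul_one_sub, q,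
    if_pos rfl, Finset.sum_range_succ]
  push_cast
  ring

theorem sum_Icc_w_mul (θ : ℝ) (f : ℕ → ℝ) (n : ℕ) :
    ∑ s ∈ Finset.Icc 1 (n + 1), w θ s * f (n + 1 - s)
      = f n + (1 - θ) * ∑ i ∈ Finset.range n, f i := by
  rw [← Finset.Ico_add_one_right_eq_Icc, Finset.sum_Ico_eq_sum_range, Nat.add_sub_cancel,
    Finset.sum_range_succ', ← Finset.sum_range_reflect, Finset.mul_sum, add_comm]
  congr 1
  · simp [w]
  · refine Finset.sum_congr rfl fun i hi => ?_
    rw [Finset.mem_range] at hi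
    rw [w, if_neg (by omega)]
    congr 2
    omega

theorem sum_Icc_w_mul_geom_sum (θ : ℝ) (N : ℕ) :
    ∑ s ∈ Finset.Icc 1 N, w θ s * ∑ k ∈ Finset.range (N - s + 1), θ ^ k = N := by
  cases N with
  | zero => simp
  | succ n =>
    have hgeom (i : ℕ) : (1 - θ) * ∑ k ∈ Finset.range (i + 1), θ ^ k = 1 - θ ^ (i + 1) :=
      mul_neg_geom_sum θ (i + 1)
    rw [sum_Icc_w_mul θ (fun m => ∑ k ∈ Finset.range (m + 1), θ ^ k), Finset.mul_sum]
    simp only [hgeom, Finset.sum_sub_distrib, Finset.sum_const, Finset.card_range, nsmul_eq_mul,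
      mul_one]
    rw [Finset.sum_range_succ']
    push_cast
    ring

theorem spp_expected_side_length_general (θ : ℝ) (N : ℕ) :
    ∑ s ∈ Finset.Icc 1 N, ∑ l ∈ Finset.Icc 1 (N - s + 1),
        (l : ℝ) * (w θ s * q θ N s l / (θ + (1 - θ) * N))
      = (N : ℝ) / (θ + (1 - θ) * N) := by
  have hinner (s : ℕ) : ∑ l ∈ Finset.Icc 1 (N - s + 1), (l : ℝ) * (w θ s * q θ N s l)
      = w θ s * ∑ k ∈ Finset.range (N - s + 1), θ ^ k := by
    rw [← sum_Icc_mul_q, Finset.mul_sum]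
    exact Finset.sum_congr rfl fun l _ => mul_left_comm _ _ _
  simp only [← mul_div_assoc, ← Finset.sum_div, hinner, sum_Icc_w_mul_geom_sum]

/-- Expected side-length under the alternative-construction nonempty-patch distribution:
`Σ_{s=1}^{N} Σ_{l=1}^{N−s+1} l · w(s)·q(l|s)/(θ+(1−θ)·N) = N/(θ+(1−θ)·N)`. -/
theorem spp_expected_side_length (θ : ℝ) (hθ0 : 0 ≤ θ) (hθ1 : θ ≤ 1)
    (N : ℕ) (hN : 0 < N) :
    ∑ s ∈ Finset.Icc 1 N, ∑ l ∈ Finset.Icc 1 (N - s + 1),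
        (l : ℝ) * (w θ s * q θ N s l / (θ + (1 - θ) * N))
      = (N : ℝ) / (θ + (1 - θ) * N) :=
  spp_expected_side_length_general θ N
end

section
/- (Proposition 2, terminal-boundary case, one dimension.) Let θ ∈ [0,1] be real and N a positive integer. Let Y = {1,…,N+1} and X = {2,…,N+1}. Under the original-construction candidate-patch distribution on dimension size N+1, the probability that the patch interval {s,…,s+l−1} intersects X — equivalently, that l ≥ 1 and s+l−1 ≥ 2 — equals (θ+(1−θ)·N)/(N+1). Consequently (N+1)·P_Y(restriction to X nonempty) = N·P_X(side-length positive) = θ+(1−θ)·N, where P_X denotes the original-construction candidate-patch distribution on dimension size N. -/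
/-- Initial-position factor `c`: `c θ 1 = 1`, `c θ s = 1 - θ` for `s ≥ 2`. -/
noncomputable def c (θ : ℝ) (s : ℕ) : ℝ := if s = 1 then 1 else 1 - θ

/-- Conditional law of the side-length `l` given the start `s` in the original construction. -/
noncomputable def condL (θ : ℝ) (N s l : ℕ) : ℝ :=
  if l = 0 then (if s = 1 then 0 else θ) else c θ s * q θ N s l

/-- The original-construction candidate-patch distribution on dimension size `N`. -/
noncomputable def origP (θ : ℝ) (N : ℕ) (p : ℕ × ℕ) : ℝ :=
  if 1 ≤ p.1 ∧ p.1 ≤ N ∧ p.2 ≤ N - p.1 + 1 then (1 / (N : ℝ)) * condL θ N p.1 p.2 else 0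


/-! Summing the truncated geometric law `q` over the positive side lengths leaves the initial
factor `c θ s`, so the mass of a positive side length on size `N` is `(1 + (N - 1)(1 - θ)) / N`.
On size `N + 1`, a nonempty patch misses `X = {2, …, N + 1}` exactly when `(s, l) = (1, 1)`,
which has mass `(1 - θ) / (N + 1)`; subtracting it gives the first identity. -/

open Finset

lemma sum_Icc_one_geometric (θ : ℝ) (m : ℕ) :
    ∑ l ∈ Icc 1 m, θ ^ (l - 1) * (1 - θ) = 1 - θ ^ m := by
  induction m with
  | zero => simp
  | succ m ih =>
    rw [sum_Icc_succ_top (by omega), ih, Nat.add_sub_cancel]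
    ring

lemma sum_q_eq_one (θ : ℝ) (N s : ℕ) : ∑ l ∈ Icc 1 (N - s + 1), q θ N s l = 1 := by
  have hq : ∀ l ∈ Icc 1 (N - s), q θ N s l = θ ^ (l - 1) * (1 - θ) := fun l hl =>
    if_neg (by simp at hl; omega)
  rw [sum_Icc_succ_top (by omega), sum_congr rfl hq, sum_Icc_one_geometric, q, if_pos rfl]
  ring

lemma sum_condL_eq_c (θ : ℝ) (N s : ℕ) : ∑ l ∈ Icc 1 (N - s + 1), condL θ N s l = c θ s := by
  rw [← mul_one (c θ s), ← sum_q_eq_one θ N s, mul_sum]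
  exact sum_congr rfl fun l hl => if_neg (by simp at hl; omega)

lemma sum_origP_eq_c_div {θ : ℝ} {N s : ℕ} (h1 : 1 ≤ s) (hN : s ≤ N) :
    ∑ l ∈ Icc 1 (N - s + 1), origP θ N (s, l) = c θ s / N := by
  rw [div_eq_inv_mul, ← sum_condL_eq_c θ N s, mul_sum]
  refine sum_congr rfl fun l hl => ?_
  rw [origP, if_pos ⟨h1, hN, (mem_Icc.mp hl).2⟩, one_div]

lemma sum_c_eq {N : ℕ} (θ : ℝ) (hN : 0 < N) : ∑ s ∈ Icc 1 N, c θ s = θ + (1 - θ) * N := by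
  have hc : ∀ s ∈ Ioc 1 N, c θ s = 1 - θ := fun s hs => if_neg (mem_Ioc.mp hs).1.ne'
  rw [← add_sum_Ioc_eq_sum_Icc hN, sum_congr rfl hc, sum_const, Nat.card_Ioc, nsmul_eq_mul,
    Nat.cast_sub hN, c, if_pos rfl]
  push_cast
  ring

lemma natCast_mul_sum_origP_pos_eq {N : ℕ} (θ : ℝ) (hN : 0 < N) :
    (N : ℝ) * (∑ s ∈ Icc 1 N, ∑ l ∈ Icc 1 (N - s + 1), origP θ N (s, l)) = θ + (1 - θ) * N := by
  have hN' : (N : ℝ) ≠ 0 := by positivity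
  rw [sum_congr rfl fun s hs => sum_origP_eq_c_div (mem_Icc.mp hs).1 (mem_Icc.mp hs).2,
    ← sum_div, sum_c_eq θ hN, mul_div_cancel₀ _ hN']

lemma origP_one_one {N : ℕ} (θ : ℝ) (hN : 1 < N) : origP θ N (1, 1) = (1 - θ) / N := by
  simp [origP, condL, c, q, hN.le, hN.ne, div_eq_inv_mul]

lemma sum_ite_restriction_eq_sub {M : ℕ} (hM : 0 < M) (f : ℕ × ℕ → ℝ) :
    (∑ s ∈ Icc 1 M, ∑ l ∈ Icc 0 (M - s + 1), if 1 ≤ l ∧ 2 ≤ s + l - 1 then f (s, l) else 0)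
      = (∑ s ∈ Icc 1 M, ∑ l ∈ Icc 1 (M - s + 1), f (s, l)) - f (1, 1) := by
  have hsplit : ∀ s ∈ Icc 1 M, ∀ l, (if 1 ≤ l ∧ 2 ≤ s + l - 1 then f (s, l) else 0) =
      (if 1 ≤ l then f (s, l) else 0) - if s = 1 then (if l = 1 then f (s, l) else 0) else 0 := by
    intro s hs l
    simp only [mem_Icc] at hs
    split_ifs <;> first | omega | ring
  simp only [sum_congr rfl fun s hs => sum_congr rfl fun l _ => hsplit s hs l, sum_sub_distrib]
  have hpos : ∀ n, ∀ g : ℕ → ℝ,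
      (∑ l ∈ Icc 0 n, if 1 ≤ l then g l else 0) = ∑ l ∈ Icc 1 n, g l := by
    intro n g
    rw [← sum_filter]
    congr 1
    ext l
    simp only [mem_filter, mem_Icc]
    omega
  have hM1 : 1 ∈ Icc 1 M := mem_Icc.mpr ⟨le_rfl, hM⟩
  simp [hpos, sum_ite_eq', hM1]

lemma sum_restriction_origP_eq {N : ℕ} (θ : ℝ) (hN : 0 < N) :
    (∑ s ∈ Icc 1 (N + 1), ∑ l ∈ Icc 0 (N + 1 - s + 1),
        if 1 ≤ l ∧ 2 ≤ s + l - 1 then origP θ (N + 1) (s, l) else 0)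
      = (θ + (1 - θ) * N) / ((N : ℝ) + 1) := by
  have hP := natCast_mul_sum_origP_pos_eq θ (by omega : 0 < N + 1)
  push_cast at hP ⊢
  rw [sum_ite_restriction_eq_sub (by omega), origP_one_one θ (by omega),
    eq_div_iff (by positivity), sub_mul, mul_comm, hP]
  push_cast
  field_simp
  ring

theorem spp_restriction_terminal_boundary_general (θ : ℝ)
    (N : ℕ) (hN : 0 < N) :
    (∑ s ∈ Finset.Icc 1 (N + 1), ∑ l ∈ Finset.Icc 0 (N + 1 - s + 1),
        if 1 ≤ l ∧ 2 ≤ s + l - 1 then origP θ (N + 1) (s, l) else 0)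
      = (θ + (1 - θ) * N) / ((N : ℝ) + 1) ∧
    ((N : ℝ) + 1) *
      (∑ s ∈ Finset.Icc 1 (N + 1), ∑ l ∈ Finset.Icc 0 (N + 1 - s + 1),
        if 1 ≤ l ∧ 2 ≤ s + l - 1 then origP θ (N + 1) (s, l) else 0)
      = (N : ℝ) *
        (∑ s ∈ Finset.Icc 1 N, ∑ l ∈ Finset.Icc 1 (N - s + 1), origP θ N (s, l)) ∧
    (N : ℝ) * (∑ s ∈ Finset.Icc 1 N, ∑ l ∈ Finset.Icc 1 (N - s + 1), origP θ N (s, l))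
      = θ + (1 - θ) * N := by
  have hR := sum_restriction_origP_eq θ hN
  have hP := natCast_mul_sum_origP_pos_eq θ hN
  refine ⟨hR, ?_, hP⟩
  rw [hR, hP, mul_div_cancel₀ _ (by positivity)]

/-- Proposition 2, terminal-boundary case, one dimension: with `Y = {1,…,N+1}` and
`X = {2,…,N+1}`, under the original-construction candidate-patch distribution on size
`N+1`, the probability that the patch interval `{s,…,s+l−1}` intersects `X`
(i.e. `l ≥ 1` and `s+l−1 ≥ 2`) equals `(θ+(1−θ)·N)/(N+1)`.  Consequently
`(N+1)·P_Y(restriction to X nonempty) = N·P_X(side-length positive) = θ+(1−θ)·N`. -/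
theorem spp_restriction_terminal_boundary (θ : ℝ) (hθ0 : 0 ≤ θ) (hθ1 : θ ≤ 1)
    (N : ℕ) (hN : 0 < N) :
    (∑ s ∈ Finset.Icc 1 (N + 1), ∑ l ∈ Finset.Icc 0 (N + 1 - s + 1),
        if 1 ≤ l ∧ 2 ≤ s + l - 1 then origP θ (N + 1) (s, l) else 0)
      = (θ + (1 - θ) * N) / ((N : ℝ) + 1) ∧
    ((N : ℝ) + 1) *
      (∑ s ∈ Finset.Icc 1 (N + 1), ∑ l ∈ Finset.Icc 0 (N + 1 - s + 1),
        if 1 ≤ l ∧ 2 ≤ s + l - 1 then origP θ (N + 1) (s, l) else 0)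
      = (N : ℝ) *
        (∑ s ∈ Finset.Icc 1 N, ∑ l ∈ Finset.Icc 1 (N - s + 1), origP θ N (s, l)) ∧
    (N : ℝ) * (∑ s ∈ Finset.Icc 1 N, ∑ l ∈ Finset.Icc 1 (N - s + 1), origP θ N (s, l))
      = θ + (1 - θ) * N :=
  spp_restriction_terminal_boundary_general θ N hN
end

section
/- (Proposition 3, initial-boundary case, one dimension.) Let θ ∈ [0,1] be real and N a positive integer. Let Y = {1,…,N+1} and X = {1,…,N}, and let π map a pair (s,l) with l ≥ 1 and s ≤ N to the restricted patch (s, min(l, N−s+1)) on X. Then for every s_X ∈ {1,…,N} and every l_X ∈ {1,…,N−s_X+1}: P_Y({(s,l) : l ≥ 1, s ≤ N, π(s,l) = (s_X,l_X)}) / P_Y({(s,l) : l ≥ 1, s ≤ N}) = P_X({(s_X,l_X)}) / P_X({(s,l) : l ≥ 1}), where P_Y and P_X denote the original-construction candidate-patch distributions on dimension sizes N+1 and N respectively. -/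
/-! The restriction π keeps the start and cuts every length beyond the boundary of `X` down to
`N - s + 1`. Below that boundary the conditional length weights on `Y` and on `X` agree, and the
boundary length collects the `Y`-weights `θ^(N-s) (1-θ)` and `θ^(N-s+1)` of the lengths
`N - s + 1` and `N - s + 2`, which add up to its `X`-weight `θ^(N-s)`. So the image of `P_Y` on
`{s ≤ N, l ≥ 1}` is `N/(N+1) · P_X` on nonempty patches, and the factor cancels in the ratio. -/

open Finset

lemma sum_Icc_q_eq_one (θ : ℝ) (M s : ℕ) : ∑ l ∈ Icc 1 (M - s + 1), q θ M s l = 1 := by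
  rw [sum_Icc_succ_top (by omega), q, if_pos rfl, ← Ico_add_one_right_eq_Icc,
    sum_Ico_eq_sum_range, Nat.add_sub_cancel]
  have hbody : ∀ i ∈ range (M - s), q θ M s (1 + i) = θ ^ i * (1 - θ) := by
    intro i hi
    rw [mem_range] at hi
    rw [q, if_neg (by omega), Nat.add_sub_cancel_left]
  rw [sum_congr rfl hbody, ← sum_mul, geom_sum_mul_neg]
  ring

lemma origP_eq_zero_of_lt (θ : ℝ) {M s l : ℕ} (hl : M - s + 1 < l) : origP θ M (s, l) = 0 :=
  if_neg fun h => by omega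

lemma origP_eq_of_mem (θ : ℝ) {M s l : ℕ} (hs : 1 ≤ s ∧ s ≤ M) (hl : 1 ≤ l ∧ l ≤ M - s + 1) :
    origP θ M (s, l) = c θ s * q θ M s l / M := by
  rw [origP, if_pos ⟨hs.1, hs.2, hl.2⟩, condL, if_neg (by omega)]
  ring

lemma sum_Icc_origP (θ : ℝ) {M s L : ℕ} (hs : 1 ≤ s ∧ s ≤ M) (hL : M - s + 1 ≤ L) :
    ∑ l ∈ Icc 1 L, origP θ M (s, l) = c θ s / M := by
  rw [← sum_subset (Icc_subset_Icc_right hL) fun l _ hl => origP_eq_zero_of_lt θ (by simp_all)]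
  rw [sum_congr rfl fun l hl => origP_eq_of_mem θ hs (mem_Icc.mp hl), ← sum_div, ← mul_sum,
    sum_Icc_q_eq_one, mul_one]

lemma sum_Icc_prod_origP (θ : ℝ) {K M L : ℕ} (hK : K ≤ M) (hL : M ≤ L) :
    ∑ p ∈ Icc 1 K ×ˢ Icc 1 L, origP θ M p = (∑ s ∈ Icc 1 K, c θ s) / M := by
  rw [sum_product, sum_div]
  refine sum_congr rfl fun s hs => ?_
  obtain ⟨hs1, hsK⟩ := mem_Icc.mp hs
  exact sum_Icc_origP θ ⟨hs1, hsK.trans hK⟩ (by omega)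

lemma q_succ_of_lt (θ : ℝ) {N s l : ℕ} (hl : l < N - s + 1) : q θ (N + 1) s l = q θ N s l := by
  rw [q, q, if_neg (by omega), if_neg (by omega)]

lemma q_succ_add_q_succ (θ : ℝ) {N s : ℕ} (hs : s ≤ N) :
    q θ (N + 1) s (N - s + 1) + q θ (N + 1) s (N - s + 1 + 1) = q θ N s (N - s + 1) := by
  rw [q, q, q, if_neg (by omega), if_pos (by omega), if_pos rfl, Nat.add_sub_cancel,
    show N + 1 - s = N - s + 1 by omega, pow_succ]
  ring

lemma sum_Icc_origP_succ_fiber (θ : ℝ) {N s lX : ℕ} (hs : 1 ≤ s ∧ s ≤ N)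
    (hlX : 1 ≤ lX ∧ lX ≤ N - s + 1) :
    ∑ l ∈ Icc 1 (N + 1), (if min l (N - s + 1) = lX then origP θ (N + 1) (s, l) else 0)
      = N / (N + 1) * origP θ N (s, lX) := by
  have htop : ∀ l ∈ Icc 1 (N + 1), l ∉ Icc 1 (N - s + 1 + 1) →
      (if min l (N - s + 1) = lX then origP θ (N + 1) (s, l) else 0) = 0 := by
    intro l hl hl'
    rw [mem_Icc] at hl hl'
    rw [origP_eq_zero_of_lt θ (by omega), ite_self]
  rw [← sum_subset (Icc_subset_Icc_right (by omega)) htop, sum_Icc_succ_top (by omega)]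
  have hbelow : ∀ l ∈ Icc 1 (N - s + 1), (if min l (N - s + 1) = lX then
      origP θ (N + 1) (s, l) else 0) = if l = lX then origP θ (N + 1) (s, l) else 0 :=
    fun l hl => by rw [min_eq_left (mem_Icc.mp hl).2]
  have hY : ∀ l, 1 ≤ l → l ≤ N - s + 1 + 1 →
      origP θ (N + 1) (s, l) = c θ s * q θ (N + 1) s l / (N + 1) := fun l hl1 hl2 => by
    rw [origP_eq_of_mem θ ⟨hs.1, by omega⟩ ⟨hl1, by omega⟩, Nat.cast_succ]
  have hN : (N : ℝ) ≠ 0 := by have := hs.1.trans hs.2; positivity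
  rw [sum_congr rfl hbelow, sum_ite_eq', if_pos (mem_Icc.mpr hlX), hY lX hlX.1 (by omega),
    origP_eq_of_mem θ hs hlX]
  rcases hlX.2.lt_or_eq with hlt | rfl
  · rw [if_neg (by omega), add_zero, q_succ_of_lt θ hlt]
    field_simp
  · rw [if_pos (min_eq_right (Nat.le_succ _)), hY _ (by omega) le_rfl, ← q_succ_add_q_succ θ hs.2]
    field_simp

theorem spp_position_self_consistent_initial_general (θ : ℝ)
    (N : ℕ) (sX lX : ℕ)
    (hsX : 1 ≤ sX ∧ sX ≤ N) (hlX : 1 ≤ lX ∧ lX ≤ N - sX + 1) :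
    (∑ p ∈ Finset.Icc 1 (N + 1) ×ˢ Finset.Icc 0 (N + 1),
        if 1 ≤ p.2 ∧ p.1 ≤ N ∧ p.1 = sX ∧ min p.2 (N - p.1 + 1) = lX then
          origP θ (N + 1) p else 0) /
    (∑ p ∈ Finset.Icc 1 (N + 1) ×ˢ Finset.Icc 0 (N + 1),
        if 1 ≤ p.2 ∧ p.1 ≤ N then origP θ (N + 1) p else 0)
      = origP θ N (sX, lX) /
        (∑ p ∈ Finset.Icc 1 N ×ˢ Finset.Icc 1 N, origP θ N p) := by
  have hfiber : (Icc 1 (N + 1) ×ˢ Icc 0 (N + 1)).filter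
      (fun p => 1 ≤ p.2 ∧ p.1 ≤ N ∧ p.1 = sX ∧ min p.2 (N - p.1 + 1) = lX)
      = {sX} ×ˢ (Icc 1 (N + 1)).filter (fun l => min l (N - sX + 1) = lX) := by
    ext ⟨s, l⟩
    simp only [mem_filter, mem_product, mem_Icc, mem_singleton]
    omega
  have hnonempty : (Icc 1 (N + 1) ×ˢ Icc 0 (N + 1)).filter (fun p => 1 ≤ p.2 ∧ p.1 ≤ N)
      = Icc 1 N ×ˢ Icc 1 (N + 1) := by
    ext ⟨s, l⟩
    simp only [mem_filter, mem_product, mem_Icc]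
    omega
  have hN : (N : ℝ) ≠ 0 := by have := hsX.1.trans hsX.2; positivity
  rw [← sum_filter, hfiber, sum_product, sum_singleton, sum_filter,
    sum_Icc_origP_succ_fiber θ hsX hlX, ← sum_filter, hnonempty,
    sum_Icc_prod_origP θ (Nat.le_succ N) le_rfl, sum_Icc_prod_origP θ le_rfl le_rfl]
  push_cast
  field_simp

/-- Proposition 3, initial-boundary case, one dimension: with `Y = {1,…,N+1}`,
`X = {1,…,N}`, and `π (s,l) = (s, min l (N−s+1))` defined on patches with `l ≥ 1` and
`s ≤ N`, for every admissible target `(s_X, l_X)` on `X`: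
`P_Y(π⁻¹(s_X,l_X)) / P_Y(restriction nonempty) = P_X((s_X,l_X)) / P_X(l ≥ 1)`. -/
theorem spp_position_self_consistent_initial (θ : ℝ) (hθ0 : 0 ≤ θ) (hθ1 : θ ≤ 1)
    (N : ℕ) (hN : 0 < N) (sX lX : ℕ)
    (hsX : 1 ≤ sX ∧ sX ≤ N) (hlX : 1 ≤ lX ∧ lX ≤ N - sX + 1) :
    (∑ p ∈ Finset.Icc 1 (N + 1) ×ˢ Finset.Icc 0 (N + 1),
        if 1 ≤ p.2 ∧ p.1 ≤ N ∧ p.1 = sX ∧ min p.2 (N - p.1 + 1) = lX then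
          origP θ (N + 1) p else 0) /
    (∑ p ∈ Finset.Icc 1 (N + 1) ×ˢ Finset.Icc 0 (N + 1),
        if 1 ≤ p.2 ∧ p.1 ≤ N then origP θ (N + 1) p else 0)
      = origP θ N (sX, lX) /
        (∑ p ∈ Finset.Icc 1 N ×ˢ Finset.Icc 1 N, origP θ N p) :=
  spp_position_self_consistent_initial_general θ N sX lX hsX hlX
end

section
/- For every real number θ and every positive integer N: (Σ_{l=1}^{N−1} l·θ^{l−1}·(1−θ) + N·θ^{N−1}) + (1−θ)·Σ_{s=2}^{N} (Σ_{l=1}^{N−s} l·θ^{l−1}·(1−θ) + (N−s+1)·θ^{N−s}) = N. (Empty sums are zero; this is the key summation identity in the proof of Proposition 1, showing that the unnormalized expected side-length over all initial positions equals N.) -/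
/-!
By the tail-sum formula, the mean of the truncated geometric law on `{1, …, M + 1}` is
`∑_{i ≤ M} P(L > i) = 1 + θ + ⋯ + θ ^ M`. After multiplication by `1 - θ` the bracket for the
initial position `s ≥ 2` becomes `1 - θ ^ (N - s + 1)`, and these powers of `θ` cancel against
the geometric sum of the first bracket, leaving `N`.
-/

open Finset

theorem sum_Icc_mul_pow_mul_one_sub_add_eq_geom_sum {R : Type*} [CommRing R] (θ : R) (M : ℕ) :
    (∑ l ∈ Icc 1 M, (l : R) * θ ^ (l - 1) * (1 - θ)) + (M + 1) * θ ^ M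
      = ∑ i ∈ range (M + 1), θ ^ i := by
  induction M with
  | zero => simp
  | succ M ih =>
    rw [sum_Icc_succ_top (Nat.le_add_left 1 M), sum_range_succ, ← ih]
    push_cast [Nat.add_sub_cancel]
    ring

theorem geom_sum_add_one_sub_mul_sum_geom_sum {R : Type*} [CommRing R] (θ : R) (n : ℕ) :
    ∑ i ∈ range n, θ ^ i + (1 - θ) * ∑ k ∈ range n, ∑ i ∈ range k, θ ^ i = n := by
  have one_sub_mul_geom_sum (k : ℕ) : (1 - θ) * ∑ i ∈ range k, θ ^ i = 1 - θ ^ k := by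
    linear_combination -(geom_sum_mul θ k)
  simp only [mul_sum, one_sub_mul_geom_sum, sum_sub_distrib, sum_const, card_range, nsmul_one]
  ring

/-- Key summation identity in the proof of Proposition 1: the unnormalized expected
side-length over all initial positions equals `N`:
`(Σ_{l=1}^{N−1} l·θ^{l−1}·(1−θ) + N·θ^{N−1})
  + (1−θ)·Σ_{s=2}^{N} (Σ_{l=1}^{N−s} l·θ^{l−1}·(1−θ) + (N−s+1)·θ^{N−s}) = N`. -/
theorem spp_unnormalized_expected_side_length (θ : ℝ) (N : ℕ) (hN : 0 < N) :
    ((∑ l ∈ Finset.Icc 1 (N - 1), (l : ℝ) * θ ^ (l - 1) * (1 - θ)) + N * θ ^ (N - 1)) +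
      (1 - θ) * ∑ s ∈ Finset.Icc 2 N,
        ((∑ l ∈ Finset.Icc 1 (N - s), (l : ℝ) * θ ^ (l - 1) * (1 - θ)) +
          ((N : ℝ) - s + 1) * θ ^ (N - s))
      = (N : ℝ) := by
  obtain ⟨n, rfl⟩ : ∃ n, N = n + 1 := ⟨N - 1, by omega⟩
  have first : (∑ l ∈ Icc 1 (n + 1 - 1), (l : ℝ) * θ ^ (l - 1) * (1 - θ))
      + (n + 1 : ℕ) * θ ^ (n + 1 - 1) = ∑ i ∈ range (n + 1), θ ^ i := by
    simpa using sum_Icc_mul_pow_mul_one_sub_add_eq_geom_sum θ n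
  have inner : ∀ s ∈ Icc 2 (n + 1),
      (∑ l ∈ Icc 1 (n + 1 - s), (l : ℝ) * θ ^ (l - 1) * (1 - θ))
        + (((n + 1 : ℕ) : ℝ) - s + 1) * θ ^ (n + 1 - s)
        = ∑ i ∈ range (n + 1 + 1 - s), θ ^ i := by
    intro s hs
    have hs : s ≤ n + 1 := (mem_Icc.mp hs).2
    rw [Nat.sub_add_comm hs, ← sum_Icc_mul_pow_mul_one_sub_add_eq_geom_sum, Nat.cast_sub hs]
  have reflect : ∑ s ∈ Icc 2 (n + 1), ∑ i ∈ range (n + 1 + 1 - s), θ ^ i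
      = ∑ k ∈ range (n + 1), ∑ i ∈ range k, θ ^ i := by
    rw [← Ico_add_one_right_eq_Icc,
      sum_Ico_reflect (fun k ↦ ∑ i ∈ range k, θ ^ i) 2 (n := n + 1 + 1) (Nat.le_succ _),
      sum_range_eq_add_Ico _ n.succ_pos, range_zero, sum_empty, zero_add]
    congr 2; omega
  rw [first, sum_congr rfl inner, reflect]
  exact_mod_cast geom_sum_add_one_sub_mul_sum_geom_sum θ (n + 1)
end
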